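/- arXiv:1811.09491 — 2 statements merged into one kernel-verified Lean document; each statement's English description precedes it below -/
import Mathlib

section
/- Let ℓ : ℝ → ℝ be differentiable with |ℓ'(z)| ≤ 1 for all z, let g : ℝ^d → ℝ be differentiable, let λ > 0, Δ ≥ 0, q > 0, and let D = ((x_1,y_1),…,(x_n,y_n)) and D' = ((x_1,y_1),…,(x_{n-1},y_{n-1}),(x'_n,y'_n)) be two datasets differing only in the n-th example, with ‖x_i‖ ≤ q, ‖x'_n‖ ≤ q, and y_i, y'_n ∈ {−1,1}. If a vector w̄ ∈ ℝ^d is a critical point (gradient zero) of both perturbed objectives F(·; D, b, Δ) and F(·; D', b', Δ) for noise vectors b, b' ∈ ℝ^d, then ‖b − b'‖ ≤ 2q, and in particular ‖b‖ − ‖b'‖ ≤ 2q. -/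
/-!
At a critical point `w̄` the gradient equation reads
`(1/n) (∑ᵢ ℓ'(yᵢ⟨w̄,xᵢ⟩) yᵢ xᵢ + b) + Δ w̄ + λ ∇g(w̄) = 0`.
The terms `Δ w̄ + λ ∇g(w̄)` do not depend on the data or the noise, so comparing the equations for
`D, b` and `D', b'` gives `b - b'` as the difference of the two per-example gradients of the one
example where the datasets differ. Each has norm at most `|ℓ'| · |y| · ‖x‖ ≤ q`.
-/

open Finset InnerProductSpace

/-- The perturbed objective
`F(w; D, b, Δ) = (1/n)·Σᵢ ℓ(yᵢ⟨w,xᵢ⟩) + (1/n)⟨b,w⟩ + (Δ/2)‖w‖² + λ·g(w)`. -/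
noncomputable def perturbedObj {d n : ℕ} (ℓ : ℝ → ℝ)
    (x : Fin n → EuclideanSpace ℝ (Fin d)) (y : Fin n → ℝ)
    (g : EuclideanSpace ℝ (Fin d) → ℝ) (lam Δ : ℝ)
    (b : EuclideanSpace ℝ (Fin d)) (w : EuclideanSpace ℝ (Fin d)) : ℝ :=
  (1 / n) * ∑ i, ℓ (y i * (inner ℝ w (x i) : ℝ)) + (1 / n) * (inner ℝ b w : ℝ)
    + (Δ / 2) * ‖w‖ ^ 2 + lam * g w

section LossGradient

variable {E : Type*} [NormedAddCommGroup E] [InnerProductSpace ℝ E]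

def exampleGrad (ℓ' : ℝ → ℝ) (w x : E) (y : ℝ) : E :=
  (ℓ' (y * ⟪w, x⟫_ℝ) * y) • x

lemma hasFDerivAt_loss [CompleteSpace E] {ℓ ℓ' : ℝ → ℝ} (hdiff : ∀ z, HasDerivAt ℓ (ℓ' z) z)
    (x : E) (y : ℝ) (w : E) :
    HasFDerivAt (fun v : E => ℓ (y * ⟪v, x⟫_ℝ)) (toDual ℝ E (exampleGrad ℓ' w x y)) w := by
  have hmargin : HasFDerivAt (fun v : E => y * ⟪v, x⟫_ℝ) (innerSL ℝ (y • x)) w := by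
    convert (innerSL ℝ (y • x)).hasFDerivAt (x := w) using 1
    funext v
    rw [innerSL_apply_apply, real_inner_smul_left, real_inner_comm]
  refine ((hdiff _).comp_hasFDerivAt w hmargin).congr_fderiv ?_
  ext v
  simp only [exampleGrad, toDual_apply_apply, smul_apply,
    innerSL_apply_apply, real_inner_smul_left, smul_eq_mul]
  ring

lemma norm_exampleGrad_le {ℓ' : ℝ → ℝ} (hℓ' : ∀ z, |ℓ' z| ≤ 1) (w x : E) {y : ℝ}
    (hy : y = 1 ∨ y = -1) :
    ‖exampleGrad ℓ' w x y‖ ≤ ‖x‖ := by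
  have hy_abs : |y| = 1 := by rcases hy with rfl | rfl <;> norm_num
  rw [exampleGrad, norm_smul, Real.norm_eq_abs, abs_mul, hy_abs, mul_one]
  exact mul_le_of_le_one_left (norm_nonneg x) (hℓ' _)

end LossGradient

lemma hasGradientAt_perturbedObj {d n : ℕ} {ℓ ℓ' : ℝ → ℝ} (hdiff : ∀ z, HasDerivAt ℓ (ℓ' z) z)
    (x : Fin n → EuclideanSpace ℝ (Fin d)) (y : Fin n → ℝ)
    {g : EuclideanSpace ℝ (Fin d) → ℝ} (lam Δ : ℝ) (b : EuclideanSpace ℝ (Fin d))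
    {w : EuclideanSpace ℝ (Fin d)} (hg : DifferentiableAt ℝ g w) :
    HasGradientAt (perturbedObj ℓ x y g lam Δ b)
      ((1 / n : ℝ) • (∑ i, exampleGrad ℓ' w (x i) (y i) + b) + Δ • w + lam • gradient g w) w := by
  rw [hasGradientAt_iff_hasFDerivAt]
  have hsum := HasFDerivAt.fun_sum (u := univ) fun i _ => hasFDerivAt_loss hdiff (x i) (y i) w
  have hnoise := (innerSL ℝ b).hasFDerivAt (x := w)
  have hsq := (hasStrictFDerivAt_norm_sq w).hasFDerivAt
  have hreg := hg.hasGradientAt.hasFDerivAt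
  refine ((((hsum.const_mul (1 / n : ℝ)).add (hnoise.const_mul (1 / n : ℝ))).add
    (hsq.const_mul (Δ / 2))).add (hreg.const_mul lam)).congr_fderiv ?_
  ext v
  simp only [one_div, toDual_gradient, add_apply, smul_apply, _root_.sum_apply, toDual_apply_apply,
    smul_eq_mul, coe_innerSL_apply, nsmul_eq_mul, Nat.cast_ofNat, smul_add, map_add, map_smul,
    map_sum, add_left_inj, add_right_inj]
  ring

lemma sum_exampleGrad_add_eq_of_gradient_eq_zero {d n : ℕ} (hn : n ≠ 0) {ℓ ℓ' : ℝ → ℝ}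
    (hdiff : ∀ z, HasDerivAt ℓ (ℓ' z) z) (x : Fin n → EuclideanSpace ℝ (Fin d)) (y : Fin n → ℝ)
    {g : EuclideanSpace ℝ (Fin d) → ℝ} (lam Δ : ℝ) (b : EuclideanSpace ℝ (Fin d))
    {w : EuclideanSpace ℝ (Fin d)} (hg : DifferentiableAt ℝ g w)
    (hcrit : gradient (perturbedObj ℓ x y g lam Δ b) w = 0) :
    ∑ i, exampleGrad ℓ' w (x i) (y i) + b = -(n : ℝ) • (Δ • w + lam • gradient g w) := by
  rw [(hasGradientAt_perturbedObj hdiff x y lam Δ b hg).gradient, add_assoc,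
    add_eq_zero_iff_eq_neg] at hcrit
  calc _ = (n : ℝ) • (1 / n : ℝ) • (∑ i, exampleGrad ℓ' w (x i) (y i) + b) := by
        rw [smul_smul, mul_one_div_cancel (Nat.cast_ne_zero.mpr hn), one_smul]
    _ = _ := by rw [hcrit, smul_neg, neg_smul]

lemma sum_sub_sum_eq_of_eq_of_ne {ι M : Type*} [Fintype ι] [AddCommGroup M] {f f' : ι → M}
    (i₀ : ι) (h : ∀ i, i ≠ i₀ → f i = f' i) :
    ∑ i, f i - ∑ i, f' i = f i₀ - f' i₀ := by
  rw [← sum_sub_distrib]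
  exact sum_eq_single i₀ (fun i _ hi => sub_eq_zero.mpr (h i hi)) (by simp)

theorem noise_diff_bound_general {d n : ℕ}
    (ℓ ℓ' : ℝ → ℝ) (hdiff : ∀ z, HasDerivAt ℓ (ℓ' z) z) (hℓ' : ∀ z, |ℓ' z| ≤ 1)
    (g : EuclideanSpace ℝ (Fin d) → ℝ) (hg : Differentiable ℝ g)
    (lam Δ q : ℝ)
    (x x' : Fin n → EuclideanSpace ℝ (Fin d)) (y y' : Fin n → ℝ)
    (i₀ : Fin n)
    (hxx' : ∀ i, i ≠ i₀ → x i = x' i) (hyy' : ∀ i, i ≠ i₀ → y i = y' i)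
    (hx : ∀ i, ‖x i‖ ≤ q) (hx' : ‖x' i₀‖ ≤ q)
    (hy : ∀ i, y i = 1 ∨ y i = -1) (hy' : y' i₀ = 1 ∨ y' i₀ = -1)
    (b b' wbar : EuclideanSpace ℝ (Fin d))
    (hcrit : gradient (perturbedObj ℓ x y g lam Δ b) wbar = 0)
    (hcrit' : gradient (perturbedObj ℓ x' y' g lam Δ b') wbar = 0) :
    ‖b - b'‖ ≤ 2 * q ∧ ‖b‖ - ‖b'‖ ≤ 2 * q := by
  set G := fun i => exampleGrad ℓ' wbar (x i) (y i)
  set G' := fun i => exampleGrad ℓ' wbar (x' i) (y' i)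
  have hn : n ≠ 0 := i₀.pos.ne'
  have hbalance : ∑ i, G i + b = ∑ i, G' i + b' :=
    (sum_exampleGrad_add_eq_of_gradient_eq_zero hn hdiff x y lam Δ b (hg wbar) hcrit).trans
      (sum_exampleGrad_add_eq_of_gradient_eq_zero hn hdiff x' y' lam Δ b' (hg wbar) hcrit').symm
  have hdiffer : b - b' = G' i₀ - G i₀ := by
    rw [← sum_sub_sum_eq_of_eq_of_ne i₀ fun i hi => by simp only [G, G', hxx' i hi, hyy' i hi]]
    linear_combination (norm := abel) hbalance
  have hnorm : ‖b - b'‖ ≤ 2 * q :=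
    calc ‖b - b'‖ ≤ ‖G' i₀‖ + ‖G i₀‖ := hdiffer ▸ norm_sub_le _ _
      _ ≤ q + q := add_le_add ((norm_exampleGrad_le hℓ' _ _ hy').trans hx')
          ((norm_exampleGrad_le hℓ' _ _ (hy i₀)).trans (hx i₀))
      _ = 2 * q := (two_mul q).symm
  exact ⟨hnorm, (norm_sub_norm_le b b').trans hnorm⟩

/-- If `wbar` is a critical point of the perturbed objectives for two datasets differing only in the
`n`-th example (with data norms bounded by `q` and labels in `{-1,1}`), then `‖b - b'‖ ≤ 2q`, and
in particular `‖b‖ - ‖b'‖ ≤ 2q`. -/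
theorem noise_diff_bound {d n : ℕ} (hn : 1 ≤ n)
    (ℓ ℓ' : ℝ → ℝ) (hdiff : ∀ z, HasDerivAt ℓ (ℓ' z) z) (hℓ' : ∀ z, |ℓ' z| ≤ 1)
    (g : EuclideanSpace ℝ (Fin d) → ℝ) (hg : Differentiable ℝ g)
    (lam Δ q : ℝ) (hlam : 0 < lam) (hΔ : 0 ≤ Δ) (hq : 0 < q)
    (x x' : Fin n → EuclideanSpace ℝ (Fin d)) (y y' : Fin n → ℝ)
    (i₀ : Fin n) (hi₀ : (i₀ : ℕ) = n - 1)
    (hxx' : ∀ i, i ≠ i₀ → x i = x' i) (hyy' : ∀ i, i ≠ i₀ → y i = y' i)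
    (hx : ∀ i, ‖x i‖ ≤ q) (hx' : ‖x' i₀‖ ≤ q)
    (hy : ∀ i, y i = 1 ∨ y i = -1) (hy' : y' i₀ = 1 ∨ y' i₀ = -1)
    (b b' wbar : EuclideanSpace ℝ (Fin d))
    (hcrit : gradient (perturbedObj ℓ x y g lam Δ b) wbar = 0)
    (hcrit' : gradient (perturbedObj ℓ x' y' g lam Δ b') wbar = 0) :
    ‖b - b'‖ ≤ 2 * q ∧ ‖b‖ - ‖b'‖ ≤ 2 * q :=
  noise_diff_bound_general ℓ ℓ' hdiff hℓ' g hg lam Δ q x x' y y' i₀ hxx' hyy' hx hx' hy hy' b b'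
    wbar hcrit hcrit'
end

section
/- Let n ≥ 1, λ > 0, Δ ≥ 0 with λ + Δ > 0, c > 0, q > 0. Let H be a d×d real symmetric matrix with H − I positive semidefinite, let x_1,…,x_n, x'_n ∈ ℝ^d with ‖x_i‖ ≤ q and ‖x'_n‖ ≤ q, and let c_1,…,c_n, c'_n ∈ [0, c]. Define A = nλH + nΔI + Σ_{i=1}^n c_i x_i x_iᵀ and A' = nλH + nΔI + Σ_{i=1}^{n-1} c_i x_i x_iᵀ + c'_n x'_n x'_nᵀ. Then A and A' are positive definite and det(A') / det(A) ≤ (1 + c·q²/(n(λ+Δ)))². -/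
/-!
Write `A = B + cₙ xₙxₙᵀ` and `A' = B + c'ₙ x'ₙx'ₙᵀ`, where `B` collects the regularizer
and the `n - 1` shared examples, so that `B ⪰ n(λ + Δ) I`. By the matrix determinant lemma
`det (B + a vvᵀ) = det B · (1 + a vᵀB⁻¹v)`, hence `det A ≥ det B`, while
`vᵀB⁻¹v ≤ ‖v‖² / (n(λ + Δ))` gives `det A' ≤ det B · (1 + c q² / (n(λ + Δ)))`.
The ratio is therefore at most `1 + c q² / (n(λ + Δ))`, which is at most its square.
-/

open Finset Matrix

namespace Matrix

variable {m : Type*}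

theorem PosSemidef.posDef_of_sub_smul_one [DecidableEq m] {B : Matrix m m ℝ} {α : ℝ}
    (hα : 0 < α) (h : (B - α • 1).PosSemidef) : B.PosDef := by
  simpa using PosDef.posSemidef_add h (PosDef.one.smul hα)

variable [Fintype m]

theorem det_add_vecMulVec [DecidableEq m] {R : Type*} [CommRing R] {B : Matrix m m R}
    (hB : IsUnit B.det) (u v : m → R) :
    (B + vecMulVec u v).det = B.det * (1 + v ⬝ᵥ B⁻¹ *ᵥ u) := by
  rw [vecMulVec_eq Unit, det_add_replicateCol_mul_replicateRow hB, Matrix.mul_assoc,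
    ← replicateCol_mulVec, det_unique (n := Unit)]
  simp

theorem posSemidef_smul_vecMulVec_self {c : ℝ} (hc : 0 ≤ c) (v : m → ℝ) :
    (c • vecMulVec v v).PosSemidef := by
  simpa using (posSemidef_vecMulVec_self_star v).smul hc

theorem posSemidef_sum_smul_vecMulVec_self {ι : Type*} (s : Finset ι) {c : ι → ℝ}
    (hc : ∀ i ∈ s, 0 ≤ c i) (v : ι → m → ℝ) :
    (∑ i ∈ s, c i • vecMulVec (v i) (v i)).PosSemidef :=
  posSemidef_sum s fun i hi => posSemidef_smul_vecMulVec_self (hc i hi) (v i)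

variable [DecidableEq m]

theorem dotProduct_inv_mulVec_le {B : Matrix m m ℝ} {α : ℝ} (hα : 0 < α)
    (h : (B - α • 1).PosSemidef) (v : m → ℝ) :
    v ⬝ᵥ B⁻¹ *ᵥ v ≤ v ⬝ᵥ v / α := by
  have hB := h.posDef_of_sub_smul_one hα
  set w := B⁻¹ *ᵥ v
  have hBw : B *ᵥ w = v := by
    rw [mulVec_mulVec, mul_nonsing_inv _ hB.det_pos.ne'.isUnit, one_mulVec]
  have hαw : α * (w ⬝ᵥ w) ≤ v ⬝ᵥ w := by
    have := h.dotProduct_mulVec_nonneg w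
    rwa [star_trivial, sub_mulVec, dotProduct_sub, smul_mulVec, one_mulVec, dotProduct_smul,
      smul_eq_mul, sub_nonneg, hBw, dotProduct_comm w v] at this
  -- Expanding `0 ≤ ‖v - α w‖²` and bounding `α² ‖w‖²` by `α vᵀw` gives `α vᵀw ≤ ‖v‖²`.
  have hsq : 0 ≤ (v - α • w) ⬝ᵥ (v - α • w) := by
    simpa using dotProduct_star_self_nonneg (v - α • w)
  rw [le_div_iff₀ hα]
  simp only [dotProduct_sub, sub_dotProduct, dotProduct_smul, smul_dotProduct, smul_eq_mul,
    dotProduct_comm w v] at hsq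
  nlinarith

theorem det_le_det_add_smul_vecMulVec_self {B : Matrix m m ℝ} (hB : B.PosDef) {a : ℝ}
    (ha : 0 ≤ a) (u : m → ℝ) : B.det ≤ (B + a • vecMulVec u u).det := by
  rw [← smul_vecMulVec, det_add_vecMulVec hB.det_pos.ne'.isUnit, mulVec_smul, dotProduct_smul,
    smul_eq_mul]
  have := hB.inv.posSemidef.dotProduct_mulVec_nonneg u
  rw [star_trivial] at this
  exact le_mul_of_one_le_right hB.det_pos.le (le_add_of_nonneg_right (mul_nonneg ha this))

theorem det_add_smul_vecMulVec_self_le {B : Matrix m m ℝ} {α : ℝ} (hα : 0 < α)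
    (h : (B - α • 1).PosSemidef) {b : ℝ} (hb : 0 ≤ b) (v : m → ℝ) :
    (B + b • vecMulVec v v).det ≤ B.det * (1 + b * (v ⬝ᵥ v) / α) := by
  have hB := h.posDef_of_sub_smul_one hα
  rw [← smul_vecMulVec, det_add_vecMulVec hB.det_pos.ne'.isUnit, mulVec_smul, dotProduct_smul,
    smul_eq_mul, mul_div_assoc]
  gcongr
  · exact hB.det_pos.le
  · exact dotProduct_inv_mulVec_le hα h v

theorem det_add_smul_vecMulVec_self_div_le {B : Matrix m m ℝ} {α : ℝ} (hα : 0 < α)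
    (h : (B - α • 1).PosSemidef) {a b : ℝ} (ha : 0 ≤ a) (hb : 0 ≤ b) (u v : m → ℝ) :
    (B + b • vecMulVec v v).det / (B + a • vecMulVec u u).det ≤ 1 + b * (v ⬝ᵥ v) / α := by
  have hB := h.posDef_of_sub_smul_one hα
  have hBv := hB.add_posSemidef (posSemidef_smul_vecMulVec_self hb v)
  calc _ ≤ (B + b • vecMulVec v v).det / B.det :=
        div_le_div_of_nonneg_left hBv.det_pos.le hB.det_pos
          (det_le_det_add_smul_vecMulVec_self hB ha u)
    _ ≤ _ := (div_le_iff₀ hB.det_pos).2 <| by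
        rw [mul_comm]; exact det_add_smul_vecMulVec_self_le hα h hb v

end Matrix

theorem EuclideanSpace.dotProduct_self_eq_norm_sq {ι : Type*} [Fintype ι]
    (v : EuclideanSpace ℝ ι) : (v : ι → ℝ) ⬝ᵥ v = ‖v‖ ^ 2 := by
  rw [← real_inner_self_eq_norm_sq, EuclideanSpace.inner_eq_star_dotProduct, star_trivial]

theorem det_ratio_bound_general {d n : ℕ}
    (lam Δ c q : ℝ) (hlam : 0 < lam) (hlamΔ : 0 < lam + Δ)
    (H : Matrix (Fin d) (Fin d) ℝ) (hH1 : (H - 1).PosSemidef)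
    (x : Fin n → EuclideanSpace ℝ (Fin d)) (x' : EuclideanSpace ℝ (Fin d))
    (hx' : ‖x'‖ ≤ q)
    (cs : Fin n → ℝ) (c' : ℝ)
    (hcs : ∀ i, cs i ∈ Set.Icc (0 : ℝ) c) (hc' : c' ∈ Set.Icc (0 : ℝ) c)
    (i₀ : Fin n)
    (A A' : Matrix (Fin d) (Fin d) ℝ)
    (hA : A = (n * lam) • H + (n * Δ) • (1 : Matrix (Fin d) (Fin d) ℝ)
        + ∑ i, cs i • Matrix.vecMulVec (x i) (x i))
    (hA' : A' = (n * lam) • H + (n * Δ) • (1 : Matrix (Fin d) (Fin d) ℝ)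
        + ∑ i, (Function.update cs i₀ c') i •
            Matrix.vecMulVec ((Function.update x i₀ x') i) ((Function.update x i₀ x') i)) :
    A.PosDef ∧ A'.PosDef ∧ A'.det / A.det ≤ (1 + c * q ^ 2 / (n * (lam + Δ))) ^ 2 := by
  have hc : 0 ≤ c := hc'.1.trans hc'.2
  have hα : 0 < (n : ℝ) * (lam + Δ) := mul_pos (by exact_mod_cast i₀.pos) hlamΔ
  set B := (n * lam) • H + (n * Δ) • (1 : Matrix (Fin d) (Fin d) ℝ)
    + ∑ i ∈ univ.erase i₀, cs i • vecMulVec (x i) (x i)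
  have hBα : (B - (n * (lam + Δ)) • 1).PosSemidef := by
    have hsplit : B - (n * (lam + Δ)) • 1 = (n * lam) • (H - 1)
        + ∑ i ∈ univ.erase i₀, cs i • vecMulVec (x i) (x i) := by
      simp only [B]; module
    rw [hsplit]
    exact (hH1.smul (by positivity)).add
      (posSemidef_sum_smul_vecMulVec_self _ (fun i _ => (hcs i).1) _)
  have hB : B.PosDef := hBα.posDef_of_sub_smul_one hα
  have hAB : A = B + cs i₀ • vecMulVec (x i₀) (x i₀) := by
    rw [hA, ← sum_erase_add _ _ (mem_univ i₀), ← add_assoc]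
  have hA'B : A' = B + c' • vecMulVec x' x' := by
    rw [hA', ← sum_erase_add _ _ (mem_univ i₀), Function.update_self, Function.update_self,
      ← add_assoc]
    congr 2
    refine sum_congr rfl fun i hi => ?_
    rw [Function.update_of_ne (ne_of_mem_erase hi), Function.update_of_ne (ne_of_mem_erase hi)]
  refine ⟨hAB ▸ hB.add_posSemidef (posSemidef_smul_vecMulVec_self (hcs i₀).1 _),
    hA'B ▸ hB.add_posSemidef (posSemidef_smul_vecMulVec_self hc'.1 _), ?_⟩
  calc A'.det / A.det ≤ 1 + c' * ((x' : Fin d → ℝ) ⬝ᵥ x') / (n * (lam + Δ)) :=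
        hAB ▸ hA'B ▸ det_add_smul_vecMulVec_self_div_le hα hBα (hcs i₀).1 hc'.1 _ _
    _ ≤ 1 + c * q ^ 2 / (n * (lam + Δ)) := by
        rw [EuclideanSpace.dotProduct_self_eq_norm_sq]
        gcongr
        exact hc'.2
    _ ≤ (1 + c * q ^ 2 / (n * (lam + Δ))) ^ 2 :=
        le_self_pow₀ (le_add_of_nonneg_right (by positivity)) two_ne_zero

/-- Determinant ratio bound for the Hessians of perturbed regularized logistic-regression
objectives at a common minimizer, for two datasets differing in the `n`-th example. -/
theorem det_ratio_bound {d n : ℕ} (hn : 1 ≤ n)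
    (lam Δ c q : ℝ) (hlam : 0 < lam) (hΔ : 0 ≤ Δ) (hlamΔ : 0 < lam + Δ)
    (hc : 0 < c) (hq : 0 < q)
    (H : Matrix (Fin d) (Fin d) ℝ) (hH : H.IsSymm) (hH1 : (H - 1).PosSemidef)
    (x : Fin n → EuclideanSpace ℝ (Fin d)) (x' : EuclideanSpace ℝ (Fin d))
    (hx : ∀ i, ‖x i‖ ≤ q) (hx' : ‖x'‖ ≤ q)
    (cs : Fin n → ℝ) (c' : ℝ)
    (hcs : ∀ i, cs i ∈ Set.Icc (0 : ℝ) c) (hc' : c' ∈ Set.Icc (0 : ℝ) c)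
    (i₀ : Fin n) (hi₀ : (i₀ : ℕ) = n - 1)
    (A A' : Matrix (Fin d) (Fin d) ℝ)
    (hA : A = (n * lam) • H + (n * Δ) • (1 : Matrix (Fin d) (Fin d) ℝ)
        + ∑ i, cs i • Matrix.vecMulVec (x i) (x i))
    (hA' : A' = (n * lam) • H + (n * Δ) • (1 : Matrix (Fin d) (Fin d) ℝ)
        + ∑ i, (Function.update cs i₀ c') i •
            Matrix.vecMulVec ((Function.update x i₀ x') i) ((Function.update x i₀ x') i)) :
    A.PosDef ∧ A'.PosDef ∧ A'.det / A.det ≤ (1 + c * q ^ 2 / (n * (lam + Δ))) ^ 2 :=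
  det_ratio_bound_general lam Δ c q hlam hlamΔ H hH1 x x' hx' cs c' hcs hc' i₀ A A' hA hA'
end
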